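/- Let n, p ∈ ℕ, x₁,…,xₙ ∈ ℝᵖ, s₁,…,sₙ ≥ 0, m₁,…,mₙ ≥ 0, y₁,…,yₙ ∈ ℝ, and u_i = y_i − m_i/2. Then for all β, βₜ ∈ ℝᵖ, ℓ(β) − ℓ(βₜ) ≥ Σᵢ sᵢ uᵢ xᵢᵀ(β − βₜ) − (1/2) Σᵢ sᵢ ω(xᵢᵀβₜ, mᵢ)·((xᵢᵀβ)² − (xᵢᵀβₜ)²), where ℓ(β) = Σᵢ sᵢ[yᵢ xᵢᵀβ − mᵢ log(1 + exp(xᵢᵀβ))]. That is, the increase in the weighted observed log-likelihood is at least the increase in the Pólya-Gamma Q-function. -/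

import Mathlib

/-!
Writing `log (1 + eᵗ) = log 2 + t / 2 + log (cosh (t / 2))` reduces the claim, term by term, to
the Jaakkola–Jordan bound `log (cosh u) ≤ log (cosh u₀) + tanh u₀ / (2 u₀) * (u² - u₀²)`.
Both sides are even, and for `u ≥ 0` the right side minus the left has derivative
`u * (tanh u₀ / u₀ - tanh u / u)`, which changes sign at `u = u₀` because `tanh x / x`
decreases on `(0, ∞)`. Multiplying by `sᵢ mᵢ ≥ 0` and summing gives the theorem.
-/

open Matrix

/-- The Pólya-Gamma EM weight function: ω(t,m) = (m/(2t))·tanh(t/2) for t ≠ 0,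
and ω(0,m) = m/4. -/
noncomputable def omegaPG (t m : ℝ) : ℝ :=
  if t = 0 then m / 4 else m / (2 * t) * Real.tanh (t / 2)

namespace Real

theorem hasDerivAt_tanh (x : ℝ) : HasDerivAt tanh (1 / cosh x ^ 2) x := by
  have h := (hasDerivAt_sinh x).div (hasDerivAt_cosh x) (cosh_pos x).ne'
  rw [show sinh / cosh = tanh from funext fun y => (tanh_eq_sinh_div_cosh y).symm] at h
  exact h.congr_deriv (by rw [← cosh_sq_sub_sinh_sq x]; ring)

@[fun_prop]
theorem continuous_tanh : Continuous tanh :=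
  continuous_iff_continuousAt.mpr fun x => (hasDerivAt_tanh x).continuousAt

theorem mul_tanh_le_mul_tanh {a b : ℝ} (ha : 0 ≤ a) (hab : a ≤ b) :
    a * tanh b ≤ b * tanh a := by
  have hsinh : a ≤ sinh a * cosh a :=
    (self_le_sinh_iff.mpr ha).trans
      (le_mul_of_one_le_right (sinh_nonneg_iff.mpr ha) (one_le_cosh a))
  have hmono : MonotoneOn (fun x => x * tanh a - a * tanh x) (Set.Ici a) := by
    refine monotoneOn_of_hasDerivWithinAt_nonneg (convex_Ici a) (by fun_prop)
      (fun x _ => (((hasDerivAt_id x).mul_const (tanh a)).sub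
        ((hasDerivAt_tanh x).const_mul a)).hasDerivWithinAt) fun x hx => ?_
    rw [interior_Ici, Set.mem_Ioi] at hx
    have hcosh : cosh a ^ 2 ≤ cosh x ^ 2 := by
      rw [sq_le_sq, abs_of_pos (cosh_pos a), abs_of_pos (cosh_pos x), cosh_le_cosh,
        abs_of_nonneg ha, abs_of_nonneg (ha.trans hx.le)]
      exact hx.le
    rw [sub_nonneg, one_mul]
    calc a * (1 / cosh x ^ 2) ≤ a / cosh a ^ 2 := by
          rw [mul_one_div]; gcongr
      _ ≤ sinh a * cosh a / cosh a ^ 2 := by gcongr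
      _ = tanh a := by rw [tanh_eq_sinh_div_cosh]; field_simp
  simpa using hmono Set.self_mem_Ici hab hab

theorem log_cosh_le_sq_div_two (u : ℝ) : log (cosh u) ≤ u ^ 2 / 2 :=
  (log_le_log (cosh_pos u) (cosh_le_exp_half_sq u)).trans_eq (log_exp _)

theorem hasDerivAt_log_cosh (x : ℝ) : HasDerivAt (fun y => log (cosh y)) (tanh x) x := by
  simpa [← tanh_eq_sinh_div_cosh] using (hasDerivAt_cosh x).log (cosh_pos x).ne'

theorem log_cosh_le_of_pos {u u₀ : ℝ} (hu₀ : 0 < u₀) (hu : 0 ≤ u) :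
    log (cosh u) ≤ log (cosh u₀) + tanh u₀ / (2 * u₀) * (u ^ 2 - u₀ ^ 2) := by
  set c := tanh u₀ / (2 * u₀) with hc
  have hderiv (v : ℝ) : HasDerivAt (fun v => c * v ^ 2 - log (cosh v))
      (v * tanh u₀ / u₀ - tanh v) v := by
    refine (((hasDerivAt_pow 2 v).const_mul c).sub (hasDerivAt_log_cosh v)).congr_deriv ?_
    rw [hc]; field_simp; ring
  have hcont : Continuous (fun v => c * v ^ 2 - log (cosh v)) :=
    continuous_iff_continuousAt.mpr fun v => (hderiv v).continuousAt
  suffices c * u₀ ^ 2 - log (cosh u₀) ≤ c * u ^ 2 - log (cosh u) by linarith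
  rcases le_total u₀ u with h | h
  · refine monotoneOn_of_hasDerivWithinAt_nonneg (convex_Ici u₀) hcont.continuousOn
      (fun x _ => (hderiv x).hasDerivWithinAt) (fun x hx => ?_) Set.self_mem_Ici h h
    rw [interior_Ici, Set.mem_Ioi] at hx
    rw [sub_nonneg, le_div_iff₀ hu₀]
    linarith [mul_tanh_le_mul_tanh hu₀.le hx.le]
  · refine antitoneOn_of_hasDerivWithinAt_nonpos (convex_Icc 0 u₀) hcont.continuousOn
      (fun x _ => (hderiv x).hasDerivWithinAt) (fun x hx => ?_) ⟨hu, h⟩ ⟨hu₀.le, le_rfl⟩ h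
    rw [interior_Icc] at hx
    rw [sub_nonpos, div_le_iff₀ hu₀]
    linarith [mul_tanh_le_mul_tanh hx.1.le hx.2.le]

theorem log_cosh_le_of_ne_zero (u : ℝ) {u₀ : ℝ} (hu₀ : u₀ ≠ 0) :
    log (cosh u) ≤ log (cosh u₀) + tanh u₀ / (2 * u₀) * (u ^ 2 - u₀ ^ 2) := by
  have htanh : tanh |u₀| / (2 * |u₀|) = tanh u₀ / (2 * u₀) := by
    rcases abs_choice u₀ with h | h <;> rw [h]
    rw [tanh_neg, mul_neg, neg_div_neg_eq]
  simpa only [cosh_abs, sq_abs, htanh] using log_cosh_le_of_pos (abs_pos.mpr hu₀) (abs_nonneg u)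

theorem log_one_add_exp_eq (t : ℝ) :
    log (1 + exp t) = log 2 + t / 2 + log (cosh (t / 2)) := by
  have h : 1 + exp t = 2 * exp (t / 2) * cosh (t / 2) := by
    rw [cosh_eq]; field_simp; rw [mul_add, ← exp_add, ← exp_add]; norm_num; ring
  rw [h, log_mul (by positivity) (cosh_pos _).ne', log_mul two_ne_zero (exp_pos _).ne', log_exp]

end Real

theorem omegaPG_eq_mul (t m : ℝ) : omegaPG t m = m * omegaPG t 1 := by
  unfold omegaPG; split_ifs <;> ring

section

open Real

theorem log_one_add_exp_le (t t₀ : ℝ) :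
    log (1 + exp t) ≤ log (1 + exp t₀) + (t - t₀) / 2 + omegaPG t₀ 1 / 2 * (t ^ 2 - t₀ ^ 2) := by
  rw [log_one_add_exp_eq t, log_one_add_exp_eq t₀]
  by_cases ht₀ : t₀ = 0
  · subst ht₀
    have hω : omegaPG 0 1 = 1 / 4 := if_pos rfl
    rw [hω, zero_div, cosh_zero, log_one]
    linarith [log_cosh_le_sq_div_two (t / 2)]
  · have := log_cosh_le_of_ne_zero (t / 2) (div_ne_zero ht₀ two_ne_zero)
    have hω : omegaPG t₀ 1 / 2 * (t ^ 2 - t₀ ^ 2)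
        = tanh (t₀ / 2) / (2 * (t₀ / 2)) * ((t / 2) ^ 2 - (t₀ / 2) ^ 2) := by
      rw [omegaPG, if_neg ht₀]; field_simp
    linarith

theorem loglik_term_increase_ge_Q_term_increase {m : ℝ} (hm : 0 ≤ m) (y t t₀ : ℝ) :
    (y * t - m * log (1 + exp t)) - (y * t₀ - m * log (1 + exp t₀))
      ≥ (y - m / 2) * (t - t₀) - 1 / 2 * omegaPG t₀ m * (t ^ 2 - t₀ ^ 2) := by
  rw [omegaPG_eq_mul]
  linear_combination mul_le_mul_of_nonneg_left (log_one_add_exp_le t t₀) hm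

end

/-- The increase in the weighted observed log-likelihood is at least the increase
in the Pólya-Gamma Q-function. -/
theorem loglik_increase_ge_Q_increase (n p : ℕ) (x : Fin n → Fin p → ℝ)
    (s m y : Fin n → ℝ) (hs : ∀ i, 0 ≤ s i) (hm : ∀ i, 0 ≤ m i)
    (β βt : Fin p → ℝ) :
    (∑ i, s i * (y i * (x i ⬝ᵥ β) - m i * Real.log (1 + Real.exp (x i ⬝ᵥ β))))
      - (∑ i, s i * (y i * (x i ⬝ᵥ βt) - m i * Real.log (1 + Real.exp (x i ⬝ᵥ βt))))
    ≥ (∑ i, s i * (y i - m i / 2) * ((x i ⬝ᵥ β) - (x i ⬝ᵥ βt)))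
      - (1 / 2) * ∑ i, s i * omegaPG (x i ⬝ᵥ βt) (m i)
          * ((x i ⬝ᵥ β) ^ 2 - (x i ⬝ᵥ βt) ^ 2) := by
  rw [ge_iff_le, ← Finset.sum_sub_distrib, Finset.mul_sum, ← Finset.sum_sub_distrib]
  refine Finset.sum_le_sum fun i _ => ?_
  linear_combination mul_le_mul_of_nonneg_left
    (loglik_term_increase_ge_Q_term_increase (hm i) (y i) (x i ⬝ᵥ β) (x i ⬝ᵥ βt)) (hs i)
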